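/- There exists an absolute constant C > 0 with the following property. Let R ∈ {0,1}^{|U|×|I|} be an implicit feedback matrix in which every row and every column contains at least one 1, and consider the bipartite user–item graph it defines; for each node k let N_k denote its degree, and set N_max = max_k N_k and N_min = min_k N_k. Suppose the initial embeddings e_k^{(0)} ∈ R^d, one per node, are drawn i.i.d. from the uniform distribution on the unit sphere S^{d−1}, with d > C · N_max³ · log(|I| + |U|) / N_min. Define the one-layer propagated user embedding e_u^{(1)} = (1/√N_u) Σ_{l ∈ N(u)} (1/√N_l) e_l^{(0)}, where N(u) is the set of items interacted with by user u. Then with probability at least 3/4, simultaneously for every user u, every item i with R_{u,i} = 1, and every item j with R_{u,j} = 0, it holds that ⟨e_u^{(1)}, e_i^{(0)}⟩ > ⟨e_u^{(1)}, e_j^{(0)}⟩. -/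

import Mathlib

/-!
Put `t = √N_min / (4 N_max √N_max)`. If the item embeddings are unit vectors with pairwise
`|⟪e_i, e_j⟫| ≤ t`, then `√N_u ⟪e_u⁽¹⁾, e_i⟫ ≥ N_i^{-1/2} - N_u t / √N_min` for a neighbour `i`
of `u`, while `√N_u ⟪e_u⁽¹⁾, e_j⟫ ≤ N_u t / √N_min` for a non-neighbour `j`; the choice of `t`
makes the first bound larger.

For independent uniform unit vectors `P(|⟪X, Y⟫| > t) ≤ 2 exp(-d t² / 2)`: the cone over the
cap `{y : t ≤ ⟪x, y⟫}` of the sphere lies in the ball of radius `√(1 - t²)` around `t x`, so the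
cap has relative measure at most `(1 - t²)^(d/2)`. A union bound over the `n²` pairs of items and
`d > 160 N_max³ log(n + m) / N_min` bound the failure probability by `1/4`.
-/

open Matrix Finset MeasureTheory ProbabilityTheory
open scoped RealInnerProductSpace ENNReal

/-- Degree of a node of the bipartite user–item graph defined by a 0/1 matrix `R`:
an edge joins user `u` and item `i` iff `R u i = 1`. -/
noncomputable def bipartiteDeg {m n : ℕ} (R : Matrix (Fin m) (Fin n) ℝ) :
    Fin m ⊕ Fin n → ℕ
  | Sum.inl u => (Finset.univ.filter fun i => R u i = 1).card
  | Sum.inr i => (Finset.univ.filter fun u => R u i = 1).card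

/-- The one-layer LightGCN propagated user embedding
`e_u^{(1)} = (1/√N_u) ∑_{i ∈ N(u)} (1/√N_i) e_i^{(0)}`. -/
noncomputable def propagated {m n d : ℕ} (R : Matrix (Fin m) (Fin n) ℝ)
    (e : Fin m ⊕ Fin n → EuclideanSpace ℝ (Fin d)) (u : Fin m) :
    EuclideanSpace ℝ (Fin d) :=
  (Real.sqrt (bipartiteDeg R (Sum.inl u)))⁻¹ •
    ∑ i ∈ Finset.univ.filter (fun i => R u i = 1),
      (Real.sqrt (bipartiteDeg R (Sum.inr i)))⁻¹ • e (Sum.inr i)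

/-- The uniform probability distribution on the unit sphere `S^{d-1} ⊆ ℝ^d`
(the normalized rotation-invariant surface measure, viewed as a measure on `ℝ^d`). -/
noncomputable def uniformSphere (d : ℕ) : Measure (EuclideanSpace ℝ (Fin d)) :=
  Measure.map Subtype.val
    (((volume : Measure (EuclideanSpace ℝ (Fin d))).toSphere Set.univ)⁻¹ •
      (volume : Measure (EuclideanSpace ℝ (Fin d))).toSphere)

open Metric
open scoped Pointwise

section UniformSphere

variable {d : ℕ}

local notation "E" => EuclideanSpace ℝ (Fin d)

lemma uniformSphere_apply [NeZero d] {A : Set E} (hA : MeasurableSet A) :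
    uniformSphere d A =
      volume (Set.Ioo (0 : ℝ) 1 • (sphere (0 : E) 1 ∩ A)) / volume (ball (0 : E) 1) := by
  have hd : (d : ℝ≥0∞) ≠ 0 := by exact_mod_cast NeZero.ne d
  rw [uniformSphere, Measure.map_apply measurable_subtype_coe hA, Measure.smul_apply, smul_eq_mul,
    Measure.toSphere_apply_univ, Measure.toSphere_apply' _ (measurable_subtype_coe hA),
    Subtype.image_preimage_coe, finrank_euclideanSpace_fin,
    ENNReal.mul_inv (.inl hd) (.inl (ENNReal.natCast_ne_top d)), mul_comm (d : ℝ≥0∞)⁻¹,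
    mul_assoc, ENNReal.inv_mul_cancel_left hd (ENNReal.natCast_ne_top d), ENNReal.div_eq_inv_mul]

instance isProbabilityMeasure_uniformSphere [NeZero d] :
    IsProbabilityMeasure (uniformSphere d) := by
  refine ⟨?_⟩
  rw [uniformSphere_apply .univ, Set.inter_univ, Ioo_smul_sphere_zero le_rfl zero_lt_one,
    mul_one, zero_mul, closedBall_zero, measure_sdiff_null (measure_singleton _),
    ENNReal.div_self (measure_ball_pos _ _ one_pos).ne' measure_ball_lt_top.ne]

lemma ae_norm_eq_one_uniformSphere : ∀ᵐ x ∂uniformSphere d, ‖x‖ = 1 :=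
  (MeasurableEmbedding.subtype_coe isClosed_sphere.measurableSet).ae_map_iff.2
    (.of_forall fun y => mem_sphere_zero_iff_norm.mp y.2)

end UniformSphere

lemma Ioo_smul_sphere_inter_le_inner_subset_closedBall {F : Type*} [NormedAddCommGroup F]
    [InnerProductSpace ℝ F] {x : F} (hx : ‖x‖ = 1) {t : ℝ} (ht : 0 ≤ t) (ht2 : t ^ 2 ≤ 1 / 2) :
    Set.Ioo (0 : ℝ) 1 • (sphere (0 : F) 1 ∩ {y | t ≤ ⟪x, y⟫}) ⊆
      closedBall (t • x) √(1 - t ^ 2) := by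
  rintro _ ⟨a, ⟨ha0, ha1⟩, y, ⟨hy, hxy⟩, rfl⟩
  rw [mem_sphere_zero_iff_norm] at hy
  rw [Set.mem_ofPred_eq] at hxy
  rw [mem_closedBall, dist_eq_norm, Real.le_sqrt (norm_nonneg _) (by linarith), norm_sub_sq_real,
    norm_smul, norm_smul, real_inner_smul_left, real_inner_smul_right, real_inner_comm, hx, hy,
    Real.norm_of_nonneg ha0.le, Real.norm_of_nonneg ht]
  -- `‖a y - t x‖² ≤ a² - 2 a t² + t²`, and `a² - 2 a t² + 2 t² - 1 = (a - 1) (a + 1 - 2 t²) ≤ 0`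
  nlinarith [mul_le_mul_of_nonneg_left hxy (by positivity : 0 ≤ a * t),
    mul_nonneg (sub_nonneg.2 ha1.le) (by linarith : 0 ≤ a + 1 - 2 * t ^ 2)]

lemma sqrt_one_sub_pow_le_exp (s : ℝ) (d : ℕ) :
    √(1 - s) ^ d ≤ Real.exp (-(d * s / 2)) := by
  have h : √(1 - s) ≤ Real.exp (-s / 2) := by
    rw [Real.exp_half]
    exact Real.sqrt_le_sqrt (by linarith [Real.add_one_le_exp (-s)])
  calc √(1 - s) ^ d ≤ Real.exp (-s / 2) ^ d := by gcongr
    _ = Real.exp (-(d * s / 2)) := by rw [← Real.exp_nat_mul]; ring_nf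

section Cap

variable {d : ℕ} [NeZero d]

local notation "E" => EuclideanSpace ℝ (Fin d)

lemma uniformSphere_le_inner_le {x : E} (hx : ‖x‖ = 1) {t : ℝ} (ht : 0 ≤ t)
    (ht2 : t ^ 2 ≤ 1 / 2) :
    uniformSphere d {y | t ≤ ⟪x, y⟫} ≤ ENNReal.ofReal (Real.exp (-(d * t ^ 2 / 2))) := by
  have hA : MeasurableSet {y : E | t ≤ ⟪x, y⟫} :=
    measurableSet_le measurable_const (measurable_const.inner measurable_id)
  calc uniformSphere d {y | t ≤ ⟪x, y⟫}
      ≤ volume (closedBall (t • x) √(1 - t ^ 2)) / volume (ball (0 : E) 1) := by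
        rw [uniformSphere_apply hA]
        gcongr
        exact Ioo_smul_sphere_inter_le_inner_subset_closedBall hx ht ht2
    _ = ENNReal.ofReal (√(1 - t ^ 2) ^ d) := by
        rw [Measure.addHaar_closedBall_eq_addHaar_ball,
          Measure.addHaar_ball _ _ (Real.sqrt_nonneg _), finrank_euclideanSpace_fin,
          ENNReal.mul_div_cancel_right (measure_ball_pos _ _ one_pos).ne' measure_ball_lt_top.ne]
    _ ≤ _ := ENNReal.ofReal_le_ofReal (sqrt_one_sub_pow_le_exp _ d)

lemma uniformSphere_lt_abs_inner_le {x : E} (hx : ‖x‖ = 1) {t : ℝ} (ht : 0 ≤ t)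
    (ht2 : t ^ 2 ≤ 1 / 2) :
    uniformSphere d {y | t < |⟪x, y⟫|} ≤ 2 * ENNReal.ofReal (Real.exp (-(d * t ^ 2 / 2))) := by
  have hsub : {y : E | t < |⟪x, y⟫|} ⊆ {y | t ≤ ⟪x, y⟫} ∪ {y | t ≤ ⟪-x, y⟫} := by
    intro y hy
    rw [Set.mem_ofPred_eq, lt_abs] at hy
    rw [Set.mem_union, Set.mem_ofPred_eq, Set.mem_ofPred_eq, inner_neg_left]
    rcases hy with hy | hy
    exacts [.inl hy.le, .inr hy.le]
  calc uniformSphere d {y | t < |⟪x, y⟫|}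
      ≤ uniformSphere d {y | t ≤ ⟪x, y⟫} + uniformSphere d {y | t ≤ ⟪-x, y⟫} :=
        (measure_mono hsub).trans (measure_union_le _ _)
    _ ≤ _ := by
        rw [two_mul]
        gcongr
        exacts [uniformSphere_le_inner_le hx ht ht2,
          uniformSphere_le_inner_le (by rwa [norm_neg]) ht ht2]

end Cap

section Independent

variable {d : ℕ} [NeZero d] {Ω : Type*} [MeasurableSpace Ω] {μ : Measure Ω}
  [IsProbabilityMeasure μ]

local notation "E" => EuclideanSpace ℝ (Fin d)

lemma measure_lt_abs_inner_le {X Y : Ω → E} (hX : Measurable X) (hY : Measurable Y)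
    (hXY : IndepFun X Y μ) (hmX : μ.map X = uniformSphere d) (hmY : μ.map Y = uniformSphere d)
    {t : ℝ} (ht : 0 ≤ t) (ht2 : t ^ 2 ≤ 1 / 2) :
    μ {ω | t < |⟪X ω, Y ω⟫|} ≤ 2 * ENNReal.ofReal (Real.exp (-(d * t ^ 2 / 2))) := by
  set S : Set (E × E) := {p | t < |⟪p.1, p.2⟫|}
  have hS : MeasurableSet S :=
    measurableSet_lt measurable_const (measurable_fst.inner measurable_snd).abs
  have hmap : μ.map (fun ω => (X ω, Y ω)) = (uniformSphere d).prod (uniformSphere d) := by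
    rw [(indepFun_iff_map_prod_eq_prod_map_map hX.aemeasurable hY.aemeasurable).1 hXY, hmX, hmY]
  calc μ {ω | t < |⟪X ω, Y ω⟫|}
      = ∫⁻ x, uniformSphere d (Prod.mk x ⁻¹' S) ∂uniformSphere d := by
        rw [← Measure.prod_apply hS, ← hmap, Measure.map_apply (hX.prodMk hY) hS]
        rfl
    _ ≤ ∫⁻ _, 2 * ENNReal.ofReal (Real.exp (-(d * t ^ 2 / 2))) ∂uniformSphere d := by
        refine lintegral_mono_ae ?_
        filter_upwards [ae_norm_eq_one_uniformSphere] with x hx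
        exact uniformSphere_lt_abs_inner_le hx ht ht2
    _ = 2 * ENNReal.ofReal (Real.exp (-(d * t ^ 2 / 2))) := by
        rw [lintegral_const, measure_univ, mul_one]

lemma measure_exists_lt_abs_inner_le {ι : Type*} [Fintype ι] {X : ι → Ω → E}
    (hX : ∀ i, Measurable (X i)) (hind : Pairwise fun i j => IndepFun (X i) (X j) μ)
    (hmap : ∀ i, μ.map (X i) = uniformSphere d) {t : ℝ} (ht : 0 ≤ t) (ht2 : t ^ 2 ≤ 1 / 2) :
    μ {ω | ∃ i j, i ≠ j ∧ t < |⟪X i ω, X j ω⟫|} ≤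
      ENNReal.ofReal (Fintype.card ι ^ 2 * (2 * Real.exp (-(d * t ^ 2 / 2)))) := by
  have hpair : ∀ i j, μ {ω | i ≠ j ∧ t < |⟪X i ω, X j ω⟫|} ≤
      2 * ENNReal.ofReal (Real.exp (-(d * t ^ 2 / 2))) := by
    intro i j
    by_cases hij : i = j
    · simp [hij]
    · exact (measure_mono fun ω hω => hω.2).trans
        (measure_lt_abs_inner_le (hX i) (hX j) (hind hij) (hmap i) (hmap j) ht ht2)
  calc μ {ω | ∃ i j, i ≠ j ∧ t < |⟪X i ω, X j ω⟫|}
      = μ (⋃ i, ⋃ j, {ω | i ≠ j ∧ t < |⟪X i ω, X j ω⟫|}) := by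
        simp only [Set.ofPred_exists]
    _ ≤ ∑ i, ∑ j, μ {ω | i ≠ j ∧ t < |⟪X i ω, X j ω⟫|} :=
        (measure_iUnion_fintype_le _ _).trans (Finset.sum_le_sum fun i _ =>
          measure_iUnion_fintype_le _ _)
    _ ≤ ∑ _i : ι, ∑ _j : ι, 2 * ENNReal.ofReal (Real.exp (-(d * t ^ 2 / 2))) := by
        gcongr with i _ j _
        exact hpair i j
    _ = _ := by
        rw [ENNReal.ofReal_mul (by positivity), ENNReal.ofReal_pow (by positivity),
          ENNReal.ofReal_mul zero_le_two]
        simp [sq, mul_assoc]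

lemma measure_compl_unit_and_separated_le {ι : Type*} [Fintype ι] {X : ι → Ω → E}
    (hX : ∀ i, Measurable (X i)) (hind : Pairwise fun i j => IndepFun (X i) (X j) μ)
    (hmap : ∀ i, μ.map (X i) = uniformSphere d) {t : ℝ} (ht : 0 ≤ t) (ht2 : t ^ 2 ≤ 1 / 2) :
    μ {ω | (∀ i, ‖X i ω‖ = 1) ∧ ∀ i j, i ≠ j → |⟪X i ω, X j ω⟫| ≤ t}ᶜ ≤
      ENNReal.ofReal (Fintype.card ι ^ 2 * (2 * Real.exp (-(d * t ^ 2 / 2)))) := by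
  have hunit : ∀ᵐ ω ∂μ, ∀ i, ‖X i ω‖ = 1 := ae_all_iff.2 fun i =>
    ae_of_ae_map (hX i).aemeasurable (hmap i ▸ ae_norm_eq_one_uniformSphere)
  have hsub : {ω | (∀ i, ‖X i ω‖ = 1) ∧ ∀ i j, i ≠ j → |⟪X i ω, X j ω⟫| ≤ t}ᶜ ⊆
      {ω | ¬∀ i, ‖X i ω‖ = 1} ∪ {ω | ∃ i j, i ≠ j ∧ t < |⟪X i ω, X j ω⟫|} := by
    intro ω hω
    simp only [Set.mem_compl_iff, Set.mem_ofPred_eq, not_and_or, not_forall, not_le] at hω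
    simpa only [Set.mem_union, Set.mem_ofPred_eq, not_forall, exists_prop] using hω
  calc _ ≤ μ {ω | ¬∀ i, ‖X i ω‖ = 1} + μ {ω | ∃ i j, i ≠ j ∧ t < |⟪X i ω, X j ω⟫|} :=
        (measure_mono hsub).trans (measure_union_le _ _)
    _ ≤ _ := by
        rw [ae_iff.1 hunit, zero_add]
        exact measure_exists_lt_abs_inner_le hX hind hmap ht ht2

end Independent

section Scores

variable {ι F : Type*} [NormedAddCommGroup F] [InnerProductSpace ℝ F]

lemma abs_inner_sum_smul_le (s : Finset ι) (g : ι → ℝ) (v : ι → F) (w : F) {γ t : ℝ}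
    (hg : ∀ l ∈ s, |g l| ≤ γ) (hv : ∀ l ∈ s, |⟪v l, w⟫| ≤ t) :
    |⟪∑ l ∈ s, g l • v l, w⟫| ≤ s.card * (γ * t) := by
  rw [sum_inner, ← nsmul_eq_mul]
  refine (Finset.abs_sum_le_sum_abs _ _).trans (Finset.sum_le_card_nsmul _ _ _ fun l hl => ?_)
  rw [real_inner_smul_left, abs_mul]
  exact mul_le_mul (hg l hl) (hv l hl) (abs_nonneg _) ((abs_nonneg _).trans (hg l hl))

lemma inner_sum_smul_lt_of_mem_of_notMem [DecidableEq ι] (s : Finset ι) (g : ι → ℝ)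
    (v : ι → F) {γ t : ℝ} (hg : ∀ l ∈ s, |g l| ≤ γ) (hv : ∀ l, ‖v l‖ = 1)
    (hsep : ∀ l k, l ≠ k → |⟪v l, v k⟫| ≤ t) {i j : ι} (hi : i ∈ s) (hj : j ∉ s)
    (hgap : 2 * (s.card * (γ * t)) < g i) :
    ⟪∑ l ∈ s, g l • v l, v j⟫ < ⟪∑ l ∈ s, g l • v l, v i⟫ := by
  have hγt : 0 ≤ γ * t := mul_nonneg ((abs_nonneg _).trans (hg i hi))
    ((abs_nonneg _).trans (hsep i j (ne_of_mem_of_not_mem hi hj)))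
  have hJ := abs_inner_sum_smul_le s g v (v j) hg fun l hl =>
    hsep l j (ne_of_mem_of_not_mem hl hj)
  have hI := abs_inner_sum_smul_le (s.erase i) g v (v i)
    (fun l hl => hg l (Finset.mem_of_mem_erase hl)) fun l hl => hsep l i (Finset.ne_of_mem_erase hl)
  have hcard : ((s.erase i).card : ℝ) * (γ * t) ≤ s.card * (γ * t) :=
    mul_le_mul_of_nonneg_right (by exact_mod_cast Finset.card_erase_le) hγt
  have hsplit : ⟪∑ l ∈ s, g l • v l, v i⟫ = g i + ⟪∑ l ∈ s.erase i, g l • v l, v i⟫ := by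
    rw [← Finset.add_sum_erase s _ hi, inner_add_left, real_inner_smul_left,
      real_inner_self_eq_norm_sq, hv i, one_pow, mul_one]
  linarith [abs_le.1 hI, abs_le.1 hJ]

end Scores

lemma inner_propagated_lt {m n d : ℕ} (R : Matrix (Fin m) (Fin n) ℝ)
    (v : Fin m ⊕ Fin n → EuclideanSpace ℝ (Fin d)) {a b : ℕ} (hb : 0 < b)
    (hdeg : ∀ k, b ≤ bipartiteDeg R k ∧ bipartiteDeg R k ≤ a) {t : ℝ}
    (hv : ∀ i, ‖v (Sum.inr i)‖ = 1)
    (hsep : ∀ i j, i ≠ j → |⟪v (Sum.inr i), v (Sum.inr j)⟫| ≤ t)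
    (hgap : 2 * a * √a * t < √b) {u : Fin m} {i j : Fin n} (hi : R u i = 1) (hj : R u j ≠ 1) :
    ⟪propagated R v u, v (Sum.inr j)⟫ < ⟪propagated R v u, v (Sum.inr i)⟫ := by
  have hdeg_pos : ∀ k, (0 : ℝ) < √(bipartiteDeg R k) := fun k =>
    Real.sqrt_pos.2 (Nat.cast_pos.2 (hb.trans_le (hdeg k).1))
  have ht : 0 ≤ t := (abs_nonneg _).trans (hsep i j fun h => hj (h ▸ hi))
  rw [propagated, real_inner_smul_left, real_inner_smul_left]
  refine mul_lt_mul_of_pos_left ?_ (inv_pos.2 (hdeg_pos _))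
  refine inner_sum_smul_lt_of_mem_of_notMem _ _ (fun l => v (Sum.inr l)) (γ := (√b)⁻¹)
    (fun l _ => ?_) hv hsep (by simpa using hi) (by simpa using hj) ?_
  · rw [abs_of_pos (inv_pos.2 (hdeg_pos _))]
    exact inv_anti₀ (by positivity) (Real.sqrt_le_sqrt (by exact_mod_cast (hdeg _).1))
  · have hNu : ((Finset.univ.filter fun l => R u l = 1).card : ℝ) ≤ a := by
      exact_mod_cast (hdeg (Sum.inl u)).2
    have ha : (0 : ℝ) < √a :=
      Real.sqrt_pos.2 (Nat.cast_pos.2 (hb.trans_le ((hdeg (.inl u)).1.trans (hdeg (.inl u)).2)))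
    calc 2 * (((Finset.univ.filter fun l => R u l = 1).card : ℝ) * ((√b)⁻¹ * t))
        ≤ 2 * (a * ((√b)⁻¹ * t)) := by gcongr
      _ = 2 * a * √a * t / (√b * √a) := by field_simp
      _ < √b / (√b * √a) := by gcongr
      _ = (√a)⁻¹ := by field_simp
      _ ≤ (√(bipartiteDeg R (Sum.inr i)))⁻¹ :=
        inv_anti₀ (hdeg_pos _) (Real.sqrt_le_sqrt (by exact_mod_cast (hdeg _).2))

lemma sq_mul_two_mul_exp_neg_le {n m x : ℝ} (hn : 1 ≤ n) (hm : 1 ≤ m)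
    (hx : 5 * Real.log (n + m) ≤ x) : n ^ 2 * (2 * Real.exp (-x)) ≤ 1 / 4 := by
  have hexp : Real.exp (-x) ≤ ((n + m) ^ 5)⁻¹ := by
    rw [← Real.exp_log (by positivity : (0 : ℝ) < (n + m) ^ 5), ← Real.exp_neg, Real.log_pow]
    exact Real.exp_le_exp.2 (by push_cast; linarith)
  have hpow : 8 * n ^ 2 ≤ (n + m) ^ 5 :=
    calc 8 * n ^ 2 = 2 ^ 3 * n ^ 2 := by norm_num
      _ ≤ (n + m) ^ 3 * (n + m) ^ 2 := by gcongr <;> linarith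
      _ = (n + m) ^ 5 := by ring
  calc n ^ 2 * (2 * Real.exp (-x)) ≤ n ^ 2 * (2 * ((n + m) ^ 5)⁻¹) := by gcongr
    _ = 2 * n ^ 2 / (n + m) ^ 5 := by ring
    _ ≤ 1 / 4 := by rw [div_le_iff₀ (by positivity)]; linarith

noncomputable def separationThreshold (a b : ℝ) : ℝ := √b / (4 * a * √a)

section SeparationThreshold

variable {a b : ℝ}

lemma separationThreshold_nonneg (ha : 0 ≤ a) : 0 ≤ separationThreshold a b := by
  unfold separationThreshold; positivity

lemma sq_separationThreshold (ha : 0 ≤ a) (hb : 0 ≤ b) :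
    separationThreshold a b ^ 2 = b / (16 * a ^ 3) := by
  rw [separationThreshold, div_pow, mul_pow, mul_pow, Real.sq_sqrt ha, Real.sq_sqrt hb]
  ring

lemma sq_separationThreshold_le_half (ha : 1 ≤ a) (hb : 0 ≤ b) (hba : b ≤ a) :
    separationThreshold a b ^ 2 ≤ 1 / 2 := by
  rw [sq_separationThreshold (by linarith) hb, div_le_iff₀ (by positivity)]
  nlinarith [one_le_pow₀ (n := 2) ha]

lemma two_mul_mul_sqrt_mul_separationThreshold_lt (ha : 0 < a) (hb : 0 < b) :
    2 * a * √a * separationThreshold a b < √b := by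
  have : 0 < √a := Real.sqrt_pos.2 ha
  rw [separationThreshold, show 2 * a * √a * (√b / (4 * a * √a)) = √b / 2 by field_simp; ring]
  linarith [Real.sqrt_pos.2 hb]

lemma five_mul_lt_mul_sq_separationThreshold (ha : 0 < a) (hb : 0 < b) {L x : ℝ}
    (hx : 160 * a ^ 3 * L / b < x) : 5 * L < x * separationThreshold a b ^ 2 / 2 := by
  rw [div_lt_iff₀ hb] at hx
  rw [sq_separationThreshold ha.le hb.le,
    show x * (b / (16 * a ^ 3)) / 2 = x * b / (32 * a ^ 3) by ring, lt_div_iff₀ (by positivity)]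
  linarith

end SeparationThreshold

lemma one_sub_le_measure_of_measure_compl_le {α : Type*} [MeasurableSpace α] {μ : Measure α}
    [IsProbabilityMeasure μ] {s : Set α} {ε : ℝ≥0∞} (h : μ sᶜ ≤ ε) : 1 - ε ≤ μ s :=
  tsub_le_iff_right.2 <| measure_univ (μ := μ) ▸
    (measure_univ_le_add_compl s).trans (by gcongr)

lemma bipartiteDeg_pos {m n : ℕ} {R : Matrix (Fin m) (Fin n) ℝ} (hrow : ∀ u, ∃ i, R u i = 1)
    (hcol : ∀ i, ∃ u, R u i = 1) : ∀ k, 0 < bipartiteDeg R k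
  | .inl u => Finset.card_pos.2 <| (hrow u).imp fun _ hi => Finset.mem_filter.2 ⟨mem_univ _, hi⟩
  | .inr i => Finset.card_pos.2 <| (hcol i).imp fun _ hu => Finset.mem_filter.2 ⟨mem_univ _, hu⟩

/-- Theorem 1: for i.i.d. uniform-on-the-sphere initial embeddings of sufficiently
large dimension, with probability at least 3/4 all positive user–item pairs score
higher than all negative pairs under one-layer untrained LightGCN. -/
theorem stmt5 :
    ∃ C : ℝ, 0 < C ∧
      ∀ (m n d : ℕ) (hm : 0 < m) (_hn : 0 < n) (R : Matrix (Fin m) (Fin n) ℝ),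
        (∀ u i, R u i = 0 ∨ R u i = 1) →
        (∀ u, ∃ i, R u i = 1) →
        (∀ i, ∃ u, R u i = 1) →
        ∀ (Ω : Type) [MeasureSpace Ω] [IsProbabilityMeasure (ℙ : Measure Ω)]
          (e : Fin m ⊕ Fin n → Ω → EuclideanSpace ℝ (Fin d)),
          (∀ k, Measurable (e k)) →
          ProbabilityTheory.iIndepFun e ℙ →
          (∀ k, Measure.map (e k) ℙ = uniformSphere d) →
          (d : ℝ) > C * ((Finset.univ.sup' ⟨Sum.inl ⟨0, hm⟩, Finset.mem_univ _⟩
              (bipartiteDeg R) : ℕ) : ℝ) ^ 3 * Real.log ((n : ℝ) + (m : ℝ)) /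
            ((Finset.univ.inf' ⟨Sum.inl ⟨0, hm⟩, Finset.mem_univ _⟩
              (bipartiteDeg R) : ℕ) : ℝ) →
          ℙ {ω | ∀ (u : Fin m) (i j : Fin n), R u i = 1 → R u j = 0 →
              ⟪propagated R (fun k => e k ω) u, e (Sum.inr i) ω⟫ >
              ⟪propagated R (fun k => e k ω) u, e (Sum.inr j) ω⟫} ≥ 3 / 4 := by
  refine ⟨160, by norm_num, ?_⟩
  intro m n d hm hn R _ hrow hcol Ω _ _ e he hindep hmap hd
  set a := Finset.univ.sup' ⟨Sum.inl ⟨0, hm⟩, Finset.mem_univ _⟩ (bipartiteDeg R)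
  set b := Finset.univ.inf' ⟨Sum.inl ⟨0, hm⟩, Finset.mem_univ _⟩ (bipartiteDeg R)
  have hdeg : ∀ k, b ≤ bipartiteDeg R k ∧ bipartiteDeg R k ≤ a := fun k =>
    ⟨Finset.inf'_le _ (Finset.mem_univ k), Finset.le_sup' _ (Finset.mem_univ k)⟩
  have hb : 0 < b := (Finset.lt_inf'_iff _).2 fun k _ => bipartiteDeg_pos hrow hcol k
  have hb1 : (1 : ℝ) ≤ b := by exact_mod_cast hb
  have hba : (b : ℝ) ≤ a := by exact_mod_cast (hdeg (.inl ⟨0, hm⟩)).1.trans (hdeg _).2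
  set t := separationThreshold a b
  have hdt : 5 * Real.log (n + m) < d * t ^ 2 / 2 :=
    five_mul_lt_mul_sq_separationThreshold (by linarith) (by linarith) hd
  have : NeZero d := ⟨fun h0 => by
    have : 0 < Real.log (n + m) := Real.log_pos (by norm_cast; omega)
    rw [h0, Nat.cast_zero, zero_mul, zero_div] at hdt
    linarith⟩
  have hbad := measure_compl_unit_and_separated_le (μ := ℙ) (X := fun i => e (.inr i))
    (fun i => he _) (fun i j hij => hindep.indepFun (Sum.inr_injective.ne hij)) (fun i => hmap _)
    (separationThreshold_nonneg (by linarith)) (sq_separationThreshold_le_half (by linarith)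
      (by linarith) hba)
  have hsmall := sq_mul_two_mul_exp_neg_le (by exact_mod_cast hn) (by exact_mod_cast hm) hdt.le
  rw [ge_iff_le]
  calc (3 / 4 : ℝ≥0∞) = 1 - ENNReal.ofReal (1 / 4) := by
        rw [← ENNReal.ofReal_one, ← ENNReal.ofReal_sub _ (by norm_num)]
        norm_num [ENNReal.ofReal_div_of_pos]
    _ ≤ ℙ {ω | (∀ i, ‖e (.inr i) ω‖ = 1) ∧ ∀ i j, i ≠ j → |⟪e (.inr i) ω, e (.inr j) ω⟫| ≤ t} :=
        one_sub_le_measure_of_measure_compl_le <| hbad.trans <| by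
          rw [Fintype.card_fin]; exact ENNReal.ofReal_le_ofReal hsmall
    _ ≤ _ := by
        refine measure_mono fun ω hω u i j hi hj => ?_
        exact inner_propagated_lt R (fun k => e k ω) hb hdeg hω.1 hω.2
          (two_mul_mul_sqrt_mul_separationThreshold_lt (by linarith) (by linarith)) hi
          (by rw [hj]; exact zero_ne_one)
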